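/- Let X₁, …, Xₙ be jointly distributed random variables with values in {−1, 1} on a finite probability space such that Var X_i > 0 for every i. Then E_{j∈[n]} Var X_j − E_{i,j∈[n]} E_{{X_i}} Var[X_j | X_i] = E_{i,j∈[n]} Cov(X_i, X_j)² · (1/2)·(1/Var X_i + 1/Var X_j). -/

import Mathlib

open Finset

noncomputable section

variable {Ω : Type*} [Fintype Ω]

/-- Expectation of a real random variable `f` under the weight function `p`. -/
def pExp (p : Ω → ℝ) (f : Ω → ℝ) : ℝ := ∑ ω, p ω * f ω

/-- Probability of the event `E` under the weight function `p`. -/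
def pProb (p : Ω → ℝ) (E : Ω → Prop) [DecidablePred E] : ℝ := ∑ ω, if E ω then p ω else 0

/-- Variance of a real random variable under `p`. -/
def pVar (p : Ω → ℝ) (f : Ω → ℝ) : ℝ := pExp p (fun ω => (f ω - pExp p f) ^ 2)

/-- Covariance of two real random variables under `p`. -/
def pCov (p : Ω → ℝ) (f g : Ω → ℝ) : ℝ :=
  pExp p (fun ω => (f ω - pExp p f) * (g ω - pExp p g))

/-- The measure `p` conditioned on the event `E`. -/
def pCond (p : Ω → ℝ) (E : Ω → Prop) [DecidablePred E] : Ω → ℝ :=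
  fun ω => if E ω then p ω / pProb p E else 0

/-- `E_{{Y}} Var[f | Y]`: the expectation over the distribution of `Y` of the variance of
the real random variable `f` conditioned on the value of `Y`. -/
def pCondVar (p : Ω → ℝ) (f : Ω → ℝ) {β : Type*} [DecidableEq β] (Y : Ω → β) : ℝ :=
  ∑ y ∈ Finset.univ.image Y,
    if 0 < pProb p (fun ω => Y ω = y)
    then pProb p (fun ω => Y ω = y) * pVar (pCond p (fun ω => Y ω = y)) f
    else 0

/-!
Conditioning on a `±1`-valued `g` splits `Ω` into the events `g = 1`, `g = -1` of probabilities
`q`, `r`, and `Var g = 4qr`. Writing `S`, `T` for the partial expectations of `f` on these events,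
`Var f - E_g Var[f | g] = S²/q + T²/r - (S + T)²` (the variance of `E[f | g]`), and since
`Cov(g, f) = (S - T) - (q - r)(S + T)` this is `Cov(g, f)² / Var g`. Summing over ordered pairs
`(i, j)` and symmetrising `1 / Var X_i` using `Cov(X_i, X_j) = Cov(X_j, X_i)` gives the theorem.
-/

def pExpOn (p : Ω → ℝ) (E : Ω → Prop) [DecidablePred E] (f : Ω → ℝ) : ℝ :=
  ∑ ω, if E ω then p ω * f ω else 0

section Moments

variable (p : Ω → ℝ)

theorem pProb_eq_pExpOn (E : Ω → Prop) [DecidablePred E] : pProb p E = pExpOn p E 1 := by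
  simp [pProb, pExpOn]

theorem pCov_comm (f g : Ω → ℝ) : pCov p f g = pCov p g f := by
  simp only [pCov, mul_comm]

variable {p}

theorem pCov_eq_pExp_mul_sub (hsum : ∑ ω, p ω = 1) (f g : Ω → ℝ) :
    pCov p f g = pExp p (fun ω => f ω * g ω) - pExp p f * pExp p g := by
  have h : ∀ ω, p ω * ((f ω - pExp p f) * (g ω - pExp p g)) =
      p ω * (f ω * g ω) - pExp p g * (p ω * f ω) - pExp p f * (p ω * g ω)
        + pExp p f * pExp p g * p ω := fun ω => by ring
  rw [pCov, pExp, sum_congr rfl fun ω _ => h ω]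
  simp only [sum_add_distrib, sum_sub_distrib, ← mul_sum, hsum, pExp]
  ring

theorem pVar_eq_pExp_sq_sub (hsum : ∑ ω, p ω = 1) (f : Ω → ℝ) :
    pVar p f = pExp p (fun ω => f ω ^ 2) - pExp p f ^ 2 := by
  simpa only [pCov, pVar, sq] using pCov_eq_pExp_mul_sub hsum f f

end Moments

section Conditioning

variable {p : Ω → ℝ} {E : Ω → Prop} [DecidablePred E]

theorem pExp_pCond (f : Ω → ℝ) : pExp (pCond p E) f = pExpOn p E f / pProb p E := by
  simp only [pExp, pCond, pExpOn, sum_div]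
  refine sum_congr rfl fun ω _ => ?_
  split_ifs <;> ring

theorem sum_pCond (hE : pProb p E ≠ 0) : ∑ ω, pCond p E ω = 1 := by
  simpa [pExp, ← pProb_eq_pExpOn, hE] using pExp_pCond (p := p) (E := E) 1

theorem pProb_mul_pVar_pCond (hE : pProb p E ≠ 0) (f : Ω → ℝ) :
    pProb p E * pVar (pCond p E) f =
      pExpOn p E (fun ω => f ω ^ 2) - pExpOn p E f ^ 2 / pProb p E := by
  rw [pVar_eq_pExp_sq_sub (sum_pCond hE), pExp_pCond, pExp_pCond]
  field_simp

end Conditioning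

section TwoValued

variable {p : Ω → ℝ} {g : Ω → ℝ}

theorem pCondVar_eq_of_two_values {a b : ℝ} (hab : a ≠ b) (hg : ∀ ω, g ω = a ∨ g ω = b)
    (ha : 0 < pProb p (g · = a)) (hb : 0 < pProb p (g · = b)) (f : Ω → ℝ) :
    pCondVar p f g = pProb p (g · = a) * pVar (pCond p (g · = a)) f
      + pProb p (g · = b) * pVar (pCond p (g · = b)) f := by
  have himage : univ.image g ⊆ {a, b} := by
    rintro y hy
    obtain ⟨ω, -, rfl⟩ := mem_image.mp hy
    rcases hg ω with h | h <;> simp [h]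
  have hnull : ∀ y ∉ univ.image g, pProb p (g · = y) = 0 := fun y hy =>
    sum_eq_zero fun ω _ => if_neg fun h => hy (mem_image.mpr ⟨ω, mem_univ ω, h⟩)
  rw [pCondVar, sum_subset himage fun y _ hy => by simp [hnull y hy], sum_pair hab, if_pos ha,
    if_pos hb]

variable (p) in
theorem pExp_mul_of_pm_one (hg : ∀ ω, g ω = 1 ∨ g ω = -1) (φ : ℝ → ℝ) (h : Ω → ℝ) :
    pExp p (fun ω => φ (g ω) * h ω) =
      φ 1 * pExpOn p (g · = 1) h + φ (-1) * pExpOn p (g · = -1) h := by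
  simp only [pExp, pExpOn, mul_sum, ← sum_add_distrib]
  refine sum_congr rfl fun ω _ => ?_
  rcases hg ω with hω | hω <;> norm_num [hω] <;> ring

theorem pVar_sub_pCondVar_of_pm_one (hsum : ∑ ω, p ω = 1) (hg : ∀ ω, g ω = 1 ∨ g ω = -1)
    (hvar : 0 < pVar p g) (f : Ω → ℝ) :
    pVar p f - pCondVar p f g = pCov p g f ^ 2 / pVar p g := by
  have hexp := pExp_mul_of_pm_one p hg
  have hsplit (h : Ω → ℝ) : pExp p h = pExpOn p (g · = 1) h + pExpOn p (g · = -1) h := by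
    simpa using hexp (fun _ => 1) h
  have hgmul (h : Ω → ℝ) :
      pExp p (fun ω => g ω * h ω) = pExpOn p (g · = 1) h - pExpOn p (g · = -1) h := by
    simpa [sub_eq_add_neg] using hexp id h
  have hqr : pProb p (g · = 1) + pProb p (g · = -1) = 1 := by
    rw [pProb_eq_pExpOn, pProb_eq_pExpOn, ← hsplit, ← hsum]
    simp [pExp]
  have hEg : pExp p g = pProb p (g · = 1) - pProb p (g · = -1) := by
    simpa [pProb_eq_pExpOn] using hgmul 1
  have hEg2 : pExp p (fun ω => g ω ^ 2) = 1 := by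
    rw [← hsum]
    exact sum_congr rfl fun ω _ => by rcases hg ω with h | h <;> simp [h]
  set q := pProb p (g · = 1) with hq_def
  set r := pProb p (g · = -1) with hr_def
  have hvarg : pVar p g = 4 * q * r := by
    rw [pVar_eq_pExp_sq_sub hsum, hEg2, hEg]
    linear_combination (-(1 + q + r)) * hqr
  have hq : 0 < q := by nlinarith
  have hr : 0 < r := by nlinarith
  rw [pVar_eq_pExp_sq_sub hsum, pCondVar_eq_of_two_values (by norm_num) hg hq hr,
    pProb_mul_pVar_pCond hq.ne', pProb_mul_pVar_pCond hr.ne', pCov_eq_pExp_mul_sub hsum,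
    hgmul, hsplit f, hsplit (fun ω => f ω ^ 2), hEg, hvarg, ← hq_def, ← hr_def]
  rw [show r = 1 - q by linarith]
  field_simp [show 1 - q ≠ 0 by linarith]
  ring

end TwoValued

theorem sum_sum_mul_half_add_of_symm {ι : Type*} [Fintype ι] (a : ι → ι → ℝ)
    (ha : ∀ i j, a i j = a j i) (w : ι → ℝ) :
    ∑ i, ∑ j, a i j * ((1 / 2) * (w i + w j)) = ∑ i, ∑ j, a i j * w i := by
  have hswap : ∑ i, ∑ j, a i j * w j = ∑ i, ∑ j, a i j * w i := by
    rw [sum_comm]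
    simp only [ha]
  have hsplit : ∀ i j, a i j * ((1 / 2) * (w i + w j)) = (a i j * w i + a i j * w j) / 2 :=
    fun i j => by ring
  simp only [hsplit, ← sum_div, sum_add_distrib, hswap]
  ring

theorem stmt_16_general {Ω : Type*} [Fintype Ω] (p : Ω → ℝ)
    (hsum : ∑ ω, p ω = 1)
    (n : ℕ) (X : Fin n → Ω → ℝ)
    (hpm : ∀ i ω, X i ω = 1 ∨ X i ω = -1)
    (hvar : ∀ i, 0 < pVar p (X i)) :
    (1 / (n : ℝ)) * ∑ j, pVar p (X j) -
        (1 / (n : ℝ) ^ 2) * ∑ i, ∑ j, pCondVar p (X j) (X i) =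
      (1 / (n : ℝ) ^ 2) * ∑ i, ∑ j,
        pCov p (X i) (X j) ^ 2 * ((1 / 2) * (1 / pVar p (X i) + 1 / pVar p (X j))) := by
  have hdrop : ∀ i j, pCov p (X i) (X j) ^ 2 * (1 / pVar p (X i)) =
      pVar p (X j) - pCondVar p (X j) (X i) := fun i j => by
    rw [pVar_sub_pCondVar_of_pm_one hsum (hpm i) (hvar i), mul_one_div]
  have hn_inv : 1 / (n : ℝ) ^ 2 * n = 1 / n := by
    rw [sq, ← div_div, div_mul_cancel_of_imp (by intro h; simp [h])]
  rw [sum_sum_mul_half_add_of_symm _ (fun i j => by rw [pCov_comm]) (fun i => 1 / pVar p (X i))]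
  simp only [hdrop, sum_sub_distrib, sum_const, card_univ, Fintype.card_fin, nsmul_eq_mul]
  rw [mul_sub, ← mul_assoc, hn_inv]

/-- For jointly distributed `{−1,1}`-valued random variables
`X₁, …, Xₙ` with positive variances, the expected decrease in average variance upon
conditioning on a random variable equals the average of
`Cov(X_i, X_j)²·½(1/Var X_i + 1/Var X_j)`. -/
theorem stmt_16 {Ω : Type*} [Fintype Ω] (p : Ω → ℝ)
    (hp : ∀ ω, 0 ≤ p ω) (hsum : ∑ ω, p ω = 1)
    (n : ℕ) (hn : 0 < n) (X : Fin n → Ω → ℝ)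
    (hpm : ∀ i ω, X i ω = 1 ∨ X i ω = -1)
    (hvar : ∀ i, 0 < pVar p (X i)) :
    (1 / (n : ℝ)) * ∑ j, pVar p (X j) -
        (1 / (n : ℝ) ^ 2) * ∑ i, ∑ j, pCondVar p (X j) (X i) =
      (1 / (n : ℝ) ^ 2) * ∑ i, ∑ j,
        pCov p (X i) (X j) ^ 2 * ((1 / 2) * (1 / pVar p (X i) + 1 / pVar p (X j))) :=
  stmt_16_general p hsum n X hpm hvar

end
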